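/- arXiv:1910.08510 — 3 statements merged into one kernel-verified Lean document; each statement's English description precedes it below -/
import Mathlib

section
/- Let X be the sum of n independent Bernoulli (indicator) random variables with μ = E(X). Then for 0 < δ < 1, Pr(X ≤ (1−δ)μ) ≤ e^(−δ²μ/2). -/
open MeasureTheory ProbabilityTheory

/-- Chernoff lower-tail bound for a sum of independent indicator random variables. -/
theorem chernoff_lower_bernoulli {Ω : Type*} [MeasurableSpace Ω]
    (P : Measure Ω) [IsProbabilityMeasure P]
    (n : ℕ) (X : Fin n → Ω → ℝ)
    (hmeas : ∀ i, Measurable (X i))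
    (hind : iIndepFun X P)
    (h01 : ∀ i ω, X i ω = 0 ∨ X i ω = 1)
    (μ : ℝ) (hμ : μ = ∑ i, ∫ ω, X i ω ∂P)
    (δ : ℝ) (hδ0 : 0 < δ) (hδ1 : δ < 1) :
    (P {ω | ∑ i, X i ω ≤ (1 - δ) * μ}).toReal ≤ Real.exp (-δ ^ 2 * μ / 2) := by
  set t : ℝ := -δ with ht_def
  have ht : t ≤ 0 := by simp [ht_def, hδ0.le]
  -- integrability of each X i
  have hXint : ∀ i, Integrable (X i) P := by
    intro i
    refine (integrable_const (1 : ℝ)).mono' (hmeas i).aestronglyMeasurable ?_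
    filter_upwards with ω
    rcases h01 i ω with h | h <;> simp [h]
  -- pointwise identity for exp (t * X i ω)
  have heq : ∀ i ω, Real.exp (t * X i ω) = 1 + (Real.exp t - 1) * X i ω := by
    intro i ω
    rcases h01 i ω with h | h <;> simp [h]
  have hexpint : ∀ i, Integrable (fun ω => Real.exp (t * X i ω)) P := by
    intro i
    simp_rw [heq]
    exact (integrable_const 1).add ((hXint i).const_mul _)
  -- the mgf of each X i
  have hmgf : ∀ i, mgf (X i) P t = 1 + (Real.exp t - 1) * ∫ ω, X i ω ∂P := by
    intro i
    have : mgf (X i) P t = ∫ ω, (1 + (Real.exp t - 1) * X i ω) ∂P := by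
      unfold mgf
      exact integral_congr_ae (Filter.Eventually.of_forall fun ω => heq i ω)
    rw [this, integral_add (integrable_const 1) ((hXint i).const_mul _),
      integral_const, integral_const_mul]
    simp
  -- expectations are in [0,1]
  have hp0 : ∀ i, 0 ≤ ∫ ω, X i ω ∂P := by
    intro i
    refine integral_nonneg fun ω => ?_
    rcases h01 i ω with h | h <;> simp [h]
  have hμ0 : 0 ≤ μ := by
    rw [hμ]; exact Finset.sum_nonneg fun i _ => hp0 i
  -- each mgf bounded by exponential
  have hmgf_le : ∀ i, mgf (X i) P t ≤ Real.exp ((Real.exp t - 1) * ∫ ω, X i ω ∂P) := by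
    intro i
    rw [hmgf i, add_comm]
    exact Real.add_one_le_exp _
  -- Chernoff bound
  have hint_sum : Integrable (fun ω => Real.exp (t * (∑ i, X i) ω)) P :=
    hind.integrable_exp_mul_sum hmeas (fun i _ => hexpint i)
  have hcher := measure_le_le_exp_mul_mgf (X := ∑ i, X i) (μ := P)
    ((1 - δ) * μ) ht hint_sum
  have hset : {ω | (∑ i, X i) ω ≤ (1 - δ) * μ} = {ω | ∑ i, X i ω ≤ (1 - δ) * μ} := by
    ext ω; simp [Finset.sum_apply]
  rw [hset] at hcher
  refine hcher.trans ?_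
  rw [hind.mgf_sum hmeas]
  have hprod : ∏ i, mgf (X i) P t ≤ Real.exp ((Real.exp t - 1) * μ) := by
    calc ∏ i, mgf (X i) P t
        ≤ ∏ i, Real.exp ((Real.exp t - 1) * ∫ ω, X i ω ∂P) :=
          Finset.prod_le_prod (fun i _ => mgf_nonneg) (fun i _ => hmgf_le i)
      _ = Real.exp (∑ i, (Real.exp t - 1) * ∫ ω, X i ω ∂P) := (Real.exp_sum _ _).symm
      _ = Real.exp ((Real.exp t - 1) * μ) := by rw [hμ, Finset.mul_sum]
  calc Real.exp (-t * ((1 - δ) * μ)) * ∏ i, mgf (X i) P t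
      ≤ Real.exp (-t * ((1 - δ) * μ)) * Real.exp ((Real.exp t - 1) * μ) := by
        exact mul_le_mul_of_nonneg_left hprod (Real.exp_nonneg _)
    _ = Real.exp (-t * ((1 - δ) * μ) + (Real.exp t - 1) * μ) := (Real.exp_add _ _).symm
    _ ≤ Real.exp (-δ ^ 2 * μ / 2) := by
        apply Real.exp_le_exp.mpr
        have hexp : Real.exp (-δ) ≤ 1 - δ + δ ^ 2 / 2 := by
          have h1 : 1 + δ + δ ^ 2 / 2 ≤ Real.exp δ := by
            have := Real.sum_le_exp_of_nonneg hδ0.le 3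
            simp [Finset.sum_range_succ] at this
            nlinarith [this]
          have h2 : Real.exp (-δ) * Real.exp δ = 1 := by
            rw [← Real.exp_add]; simp
          nlinarith [Real.exp_pos (-δ), Real.exp_pos δ, sq_nonneg δ, sq_nonneg (δ ^ 2)]
        rw [ht_def]
        nlinarith [hexp, hμ0, mul_le_mul_of_nonneg_right hexp hμ0]
end

section
/- Let T be a positive integer, and for each j ∈ {1,...,T} let X^(j) be a sum of n independent indicator random variables with mean μ_j (the families for different j need not be independent of each other). Let X = X^(1) + ... + X^(T) and μ = min_j μ_j. Then for 0 < δ < 1, Pr(X ≤ (1−δ)μT) ≤ e^(−δ²μ/2). -/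
open MeasureTheory ProbabilityTheory

lemma chernoff_aux_log {x : ℝ} (hx0 : 0 < x) (hx1 : x ≤ 1) :
    x ^ 2 - 1 ≤ 2 * x * Real.log x := by
  set s : ℝ := -Real.log x with hsdef
  have hs : 0 ≤ s := by
    have := Real.log_nonpos hx0.le hx1
    simp only [hsdef]; linarith
  have hlog : Real.log x = -s := by simp [hsdef]
  have hxe : x = Real.exp (-s) := by rw [← hlog, Real.exp_log hx0]
  have hu : 1 + s + s ^ 2 / 2 ≤ Real.exp s := Real.quadratic_le_exp_of_nonneg hs
  have hinv : Real.exp s * Real.exp (-s) = 1 := by rw [← Real.exp_add]; simp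
  have key : 1 + 2 * s * Real.exp s ≤ (Real.exp s) ^ 2 := by
    nlinarith [sq_nonneg (Real.exp s - s - 1 - s ^ 2 / 2), sq_nonneg s, sq_nonneg (s^2), hs, hu]
  have h2 := mul_le_mul_of_nonneg_right key (sq_nonneg (Real.exp (-s)))
  rw [hlog, hxe]
  nlinarith [h2, hinv, Real.exp_pos (-s), sq_nonneg (Real.exp (-s))]

/-- Chernoff bound for a sum of `T` groups of `n` independent indicator random
variables, where the groups may be dependent on each other:
`Pr(X ≤ (1−δ)μT) ≤ e^(−δ²μ/2)` with `μ = min_j E(X^(j))`. -/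
theorem chernoff_dependent_sum {Ω : Type*} [MeasurableSpace Ω]
    (P : Measure Ω) [IsProbabilityMeasure P]
    (T n : ℕ) (hT : 0 < T)
    (X : Fin T → Fin n → Ω → ℝ)
    (hmeas : ∀ j i, Measurable (X j i))
    (hind : ∀ j, iIndepFun (X j) P)
    (h01 : ∀ j i ω, X j i ω = 0 ∨ X j i ω = 1)
    (μ : ℝ) (hμ : μ = ⨅ j : Fin T, ∫ ω, ∑ i, X j i ω ∂P)
    (δ : ℝ) (hδ0 : 0 < δ) (hδ1 : δ < 1) :
    (P {ω | ∑ j, ∑ i, X j i ω ≤ (1 - δ) * μ * T}).toReal ≤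
      Real.exp (-δ ^ 2 * μ / 2) := by
  have : Nonempty (Fin T) := ⟨⟨0, hT⟩⟩
  have hX0 : ∀ j i ω, 0 ≤ X j i ω := by
    intro j i ω; rcases h01 j i ω with h | h <;> rw [h] <;> norm_num
  have hX1 : ∀ j i ω, X j i ω ≤ 1 := by
    intro j i ω; rcases h01 j i ω with h | h <;> rw [h] <;> norm_num
  have hx0 : (0:ℝ) < 1 - δ := by linarith
  set s : ℝ := -Real.log (1 - δ) with hsdef
  have hs0 : 0 < s := by
    have := Real.log_neg hx0 (by linarith)
    simp only [hsdef]; linarith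
  have hes : Real.exp (-s) = 1 - δ := by
    rw [hsdef, neg_neg, Real.exp_log hx0]
  have hTpos : (0:ℝ) < T := by exact_mod_cast hT
  set t : ℝ := -s / T with htdef
  have ht : t ≤ 0 := by
    rw [htdef, neg_div]
    have : (0:ℝ) ≤ s / T := by positivity
    linarith
  -- the group sums
  set Y : Fin T → Ω → ℝ := fun j ω => ∑ i, X j i ω with hYdef
  have hYmeas : ∀ j, Measurable (Y j) := fun j =>
    Finset.measurable_sum _ fun i _ => hmeas j i
  have hY0 : ∀ j ω, 0 ≤ Y j ω := fun j ω =>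
    Finset.sum_nonneg fun i _ => hX0 j i ω
  set S : Ω → ℝ := fun ω => ∑ j, Y j ω with hSdef
  have hSmeas : Measurable S := Finset.measurable_sum _ fun j _ => hYmeas j
  have hS0 : ∀ ω, 0 ≤ S ω := fun ω => Finset.sum_nonneg fun j _ => hY0 j ω
  -- integrability of exp of nonpositive multiples of nonneg measurable functions
  have hintexp : ∀ (f : Ω → ℝ), Measurable f → (∀ ω, 0 ≤ f ω) → ∀ c : ℝ, c ≤ 0 →
      Integrable (fun ω => Real.exp (c * f ω)) P := by
    intro f hf hfn c hc
    refine Integrable.mono' (integrable_const 1)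
      ((hf.const_mul c).exp.aestronglyMeasurable) (ae_of_all _ fun ω => ?_)
    rw [Real.norm_eq_abs, abs_of_pos (Real.exp_pos _)]
    exact Real.exp_le_one_iff.mpr (mul_nonpos_of_nonpos_of_nonneg hc (hfn ω))
  -- integrability of indicators
  have hintX : ∀ j i, Integrable (X j i) P := by
    intro j i
    refine Integrable.mono' (integrable_const 1)
      (hmeas j i).aestronglyMeasurable (ae_of_all _ fun ω => ?_)
    rw [Real.norm_eq_abs, abs_of_nonneg (hX0 j i ω)]
    exact hX1 j i ω
  -- means
  have hμj : ∀ j, (∫ ω, Y j ω ∂P) = ∑ i, ∫ ω, X j i ω ∂P := fun j =>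
    integral_finset_sum _ fun i _ => hintX j i
  have hμle : ∀ j, μ ≤ ∫ ω, Y j ω ∂P := by
    intro j
    rw [hμ]
    exact ciInf_le (Set.Finite.bddBelow (Set.finite_range _)) j
  have hμ0 : 0 ≤ μ := by
    rw [hμ]
    exact le_ciInf fun j => integral_nonneg fun ω => hY0 j ω
  -- Chernoff / Markov step
  have hintS : Integrable (fun ω => Real.exp (t * S ω)) P := hintexp S hSmeas hS0 t ht
  have h1 := measure_le_le_exp_mul_mgf (X := S) (μ := P) ((1 - δ) * μ * T) ht hintS
  -- bound each individual mgf
  set c : ℝ := Real.exp (-s) - 1 with hcdef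
  have hc : c = -δ := by rw [hcdef, hes]; ring
  have hc0 : c ≤ 0 := by rw [hc]; linarith
  have hmgf_single : ∀ j i, mgf (X j i) P (-s) = 1 + c * ∫ ω, X j i ω ∂P := by
    intro j i
    have hptwise : ∀ ω, Real.exp (-s * X j i ω) = 1 + c * X j i ω := by
      intro ω
      rcases h01 j i ω with h | h <;> rw [h] <;> simp [hcdef]
    rw [mgf]
    calc ∫ ω, Real.exp (-s * X j i ω) ∂P = ∫ ω, (1 + c * X j i ω) ∂P := by
          exact integral_congr_ae (ae_of_all _ hptwise)
      _ = 1 + c * ∫ ω, X j i ω ∂P := by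
          rw [integral_add (integrable_const 1) ((hintX j i).const_mul c),
            integral_const, integral_const_mul]
          simp
  have hmgfY : ∀ j, mgf (Y j) P (-s) ≤ Real.exp (-δ * μ) := by
    intro j
    have hYfun : Y j = ∑ i, X j i := by
      funext ω; simp [hYdef, Finset.sum_apply]
    have hprod : mgf (Y j) P (-s) = ∏ i, mgf (X j i) P (-s) := by
      rw [hYfun]; exact (hind j).mgf_sum (hmeas j) Finset.univ
    have hle : ∏ i, mgf (X j i) P (-s) ≤ ∏ i, Real.exp (c * ∫ ω, X j i ω ∂P) := by
      refine Finset.prod_le_prod (fun i _ => mgf_nonneg) (fun i _ => ?_)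
      rw [hmgf_single j i]
      have := Real.add_one_le_exp (c * ∫ ω, X j i ω ∂P)
      linarith
    have hprodexp : ∏ i, Real.exp (c * ∫ ω, X j i ω ∂P) = Real.exp (c * ∫ ω, Y j ω ∂P) := by
      rw [← Real.exp_sum, hμj j, Finset.mul_sum]
    have hfinal : Real.exp (c * ∫ ω, Y j ω ∂P) ≤ Real.exp (-δ * μ) := by
      apply Real.exp_le_exp.mpr
      rw [← hc]
      exact mul_le_mul_of_nonpos_left (hμle j) hc0
    calc mgf (Y j) P (-s) = ∏ i, mgf (X j i) P (-s) := hprod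
      _ ≤ ∏ i, Real.exp (c * ∫ ω, X j i ω ∂P) := hle
      _ = Real.exp (c * ∫ ω, Y j ω ∂P) := hprodexp
      _ ≤ Real.exp (-δ * μ) := hfinal
  -- Jensen step: mgf S P t ≤ (1/T) ∑ j, mgf (Y j) P (-s)
  have hjensen : mgf S P t ≤ (1 / T : ℝ) * ∑ j, mgf (Y j) P (-s) := by
    have hpt : ∀ ω, Real.exp (t * S ω) ≤ ∑ j, (1 / T : ℝ) * Real.exp (-s * Y j ω) := by
      intro ω
      have h := convexOn_exp.map_sum_le (t := Finset.univ)
        (w := fun _ : Fin T => (1 / T : ℝ)) (p := fun j => -s * Y j ω)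
        (fun j _ => by positivity)
        (by simp [Finset.card_univ]; field_simp)
        (fun j _ => Set.mem_univ _)
      have heq : t * S ω = ∑ j, (1 / T : ℝ) • (-s * Y j ω) := by
        simp only [smul_eq_mul, hSdef, htdef, Finset.mul_sum]
        exact Finset.sum_congr rfl fun j _ => by ring
      rw [heq]
      simpa [smul_eq_mul] using h
    have hintR : Integrable (fun ω => ∑ j, (1 / T : ℝ) * Real.exp (-s * Y j ω)) P :=
      integrable_finset_sum _ fun j _ =>
        ((hintexp (Y j) (hYmeas j) (hY0 j) (-s) (by linarith)).const_mul _)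
    calc mgf S P t = ∫ ω, Real.exp (t * S ω) ∂P := rfl
      _ ≤ ∫ ω, ∑ j, (1 / T : ℝ) * Real.exp (-s * Y j ω) ∂P :=
          integral_mono hintS hintR hpt
      _ = ∑ j, (1 / T : ℝ) * ∫ ω, Real.exp (-s * Y j ω) ∂P := by
          rw [integral_finset_sum _ fun j _ =>
            ((hintexp (Y j) (hYmeas j) (hY0 j) (-s) (by linarith)).const_mul _)]
          exact Finset.sum_congr rfl fun j _ => integral_const_mul _ _
      _ = (1 / T : ℝ) * ∑ j, mgf (Y j) P (-s) := by
          rw [Finset.mul_sum]; rfl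
  have hmgfS : mgf S P t ≤ Real.exp (-δ * μ) := by
    calc mgf S P t ≤ (1 / T : ℝ) * ∑ j, mgf (Y j) P (-s) := hjensen
      _ ≤ (1 / T : ℝ) * ∑ j : Fin T, Real.exp (-δ * μ) := by
          apply mul_le_mul_of_nonneg_left _ (by positivity)
          exact Finset.sum_le_sum fun j _ => hmgfY j
      _ = Real.exp (-δ * μ) := by
          rw [Finset.sum_const, Finset.card_univ, Fintype.card_fin, nsmul_eq_mul]
          field_simp
  -- combine
  have h2 : Real.exp (-t * ((1 - δ) * μ * T)) * mgf S P t ≤ Real.exp (-δ ^ 2 * μ / 2) := by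
    have hmgf0 : 0 ≤ mgf S P t := mgf_nonneg
    have hexp : -t * ((1 - δ) * μ * T) = s * (1 - δ) * μ := by
      rw [htdef]; field_simp
    calc Real.exp (-t * ((1 - δ) * μ * T)) * mgf S P t
        ≤ Real.exp (-t * ((1 - δ) * μ * T)) * Real.exp (-δ * μ) :=
          mul_le_mul_of_nonneg_left hmgfS (Real.exp_nonneg _)
      _ = Real.exp (s * (1 - δ) * μ + -δ * μ) := by rw [← Real.exp_add, hexp]
      _ ≤ Real.exp (-δ ^ 2 * μ / 2) := by
          apply Real.exp_le_exp.mpr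
          have hlog := chernoff_aux_log hx0 (by linarith : (1:ℝ) - δ ≤ 1)
          have hineq : s * (1 - δ) + -δ ≤ -δ ^ 2 / 2 := by
            rw [hsdef]; nlinarith [hlog]
          nlinarith [mul_le_mul_of_nonneg_right hineq hμ0]
  calc (P {ω | ∑ j, ∑ i, X j i ω ≤ (1 - δ) * μ * T}).toReal
      = (P {ω | S ω ≤ (1 - δ) * μ * T}).toReal := rfl
    _ ≤ Real.exp (-t * ((1 - δ) * μ * T)) * mgf S P t := h1
    _ ≤ Real.exp (-δ ^ 2 * μ / 2) := h2
end

section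
/- Let H[0], H[1], ... be i.i.d. Poisson with mean λ > 0, τ ≥ 1, X[r] the ER indicator, and γ = e^(−λ(τ−1))(1 − e^(−λ)). Then for any r ≥ τ, m ≥ 1, and 0 < δ < 1, Pr(X[r] + ... + X[r+τm−1] ≤ (1−δ)γτm) ≤ e^(−δ²γm/2). -/
open MeasureTheory ProbabilityTheory

/-- Analytic inequality for lower-tail Chernoff: `δ²/2 ≤ δ + (1-δ)log(1-δ)`. -/
lemma erc_log_ineq {δ : ℝ} (h0 : 0 < δ) (h1 : δ < 1) :
    δ ^ 2 / 2 ≤ δ + (1 - δ) * Real.log (1 - δ) := by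
  set f : ℝ → ℝ := fun x => x + (1 - x) * Real.log (1 - x) - x ^ 2 / 2 with hf
  have hderiv : ∀ x ∈ Set.Ico (0:ℝ) 1, HasDerivAt f (-Real.log (1 - x) - x) x := by
    intro x hx
    have hx1 : (0:ℝ) < 1 - x := by simp only [Set.mem_Ico] at hx; linarith [hx.2]
    have h₁ : HasDerivAt (fun y : ℝ => 1 - y) (-1) x := by
      simpa using (hasDerivAt_id x).const_sub 1
    have hlog : HasDerivAt (fun y : ℝ => Real.log (1 - y)) ((1 - x)⁻¹ * (-1)) x :=
      (Real.hasDerivAt_log hx1.ne').comp x h₁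
    have hmul : HasDerivAt (fun y : ℝ => (1 - y) * Real.log (1 - y))
        ((-1) * Real.log (1 - x) + (1 - x) * ((1 - x)⁻¹ * (-1))) x := h₁.mul hlog
    have hsq : HasDerivAt (fun y : ℝ => y ^ 2 / 2) x x := by
      simpa using (hasDerivAt_pow 2 x).div_const 2
    have := ((hasDerivAt_id x).add hmul).sub hsq
    refine HasDerivAt.congr_deriv this ?_
    have hinv : (1 - x) * (1 - x)⁻¹ = 1 := mul_inv_cancel₀ hx1.ne'
    linear_combination -hinv
  have hmono : MonotoneOn f (Set.Icc 0 δ) := by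
    have hsub : Set.Icc (0:ℝ) δ ⊆ Set.Ico (0:ℝ) 1 := fun x hx =>
      ⟨hx.1, lt_of_le_of_lt hx.2 h1⟩
    apply monotoneOn_of_deriv_nonneg (convex_Icc 0 δ)
    · exact fun x hx => (hderiv x (hsub hx)).continuousAt.continuousWithinAt
    · intro x hx
      rw [interior_Icc] at hx
      exact (hderiv x (hsub (Set.mem_Icc_of_Ioo hx))).differentiableAt.differentiableWithinAt
    · intro x hx
      rw [interior_Icc] at hx
      have hx' := hsub (Set.mem_Icc_of_Ioo hx)
      rw [(hderiv x hx').deriv]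
      have hx1 : (0:ℝ) < 1 - x := by simp only [Set.mem_Ico] at hx'; linarith [hx'.2]
      have := Real.log_le_sub_one_of_pos hx1
      linarith
  have h := hmono (Set.left_mem_Icc.mpr h0.le) (Set.right_mem_Icc.mpr h0.le) h0.le
  simp only [hf] at h
  norm_num at h
  linarith

lemma erc_sum_split {M : Type*} [AddCommMonoid M] (f : ℕ → M) (a b : ℕ) :
    ∑ i ∈ Finset.range (a * b), f i =
      ∑ j ∈ Finset.range a, ∑ k ∈ Finset.range b, f (j + a * k) := by
  induction b with
  | zero => simp
  | succ b ih =>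
      have h1 : a * (b + 1) = a * b + a := by ring
      rw [h1, Finset.sum_range_add, ih]
      simp_rw [Finset.sum_range_succ]
      rw [Finset.sum_add_distrib]
      congr 1
      exact Finset.sum_congr rfl fun j _ => by rw [Nat.add_comm]

lemma erc_joint {Ω : Type*} [MeasurableSpace Ω]
    (P : Measure Ω) [IsProbabilityMeasure P]
    (H : ℕ → Ω → ℕ) (hmeas : ∀ r, Measurable (H r))
    (hind : iIndepFun H P)
    (lam : ℝ) (hlam : 0 < lam)
    (hpois : ∀ r k, P {ω | H r ω = k} =
      ENNReal.ofReal (Real.exp (-lam) * lam ^ k / k.factorial))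
    (τ : ℕ) (hτ : 1 ≤ τ)
    (T : Finset ℕ) (f : ℕ → ℕ) (hf1 : ∀ i ∈ T, τ ≤ f i)
    (hsep : ∀ i ∈ T, ∀ i' ∈ T, i ≠ i' → f i + τ ≤ f i' ∨ f i' + τ ≤ f i) :
    P (⋂ i ∈ T, {ω | 1 ≤ H (f i) ω ∧ ∀ r' < f i, f i < r' + τ → H r' ω = 0}) =
      ENNReal.ofReal (Real.exp (-lam) ^ (τ - 1) * (1 - Real.exp (-lam))) ^ T.card := by
  classical
  -- single-coordinate probabilities
  have h0 : ∀ u, P (H u ⁻¹' {0}) = ENNReal.ofReal (Real.exp (-lam)) := by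
    intro u
    have hp := hpois u 0
    have hset : H u ⁻¹' {0} = {ω | H u ω = 0} := by ext ω; simp
    rw [hset, hp]; norm_num
  have h1 : ∀ u, P (H u ⁻¹' {k | 1 ≤ k}) = ENNReal.ofReal (1 - Real.exp (-lam)) := by
    intro u
    have hc : H u ⁻¹' {k | 1 ≤ k} = (H u ⁻¹' {0})ᶜ := by
      ext ω; simp [Nat.one_le_iff_ne_zero]
    rw [hc, measure_compl ((hmeas u) (measurableSet_singleton 0)) (measure_ne_top _ _),
      measure_univ, h0, ENNReal.ofReal_sub _ (Real.exp_nonneg _), ENNReal.ofReal_one]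
  set C : ℕ → Set ℕ := fun u => if ∃ i ∈ T, f i = u then {k | 1 ≤ k} else {0} with hC
  set B : ℕ → Finset ℕ := fun i => Finset.Icc (f i + 1 - τ) (f i) with hB
  -- inside a block, only the top index is a value of f
  have keyi : ∀ i ∈ T, ∀ u ∈ B i, u ≠ f i → ¬ ∃ i' ∈ T, f i' = u := by
    rintro i hi u hu hne ⟨i', hi', hfi'⟩
    have h2 := hf1 i hi
    have h3 := hf1 i' hi'
    simp only [hB, Finset.mem_Icc] at hu
    have hii : i' ≠ i := by rintro rfl; exact hne hfi'.symm
    rcases hsep i' hi' i hi hii with h | h <;> omega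
  -- rewrite the intersection
  have hset : (⋂ i ∈ T, {ω | 1 ≤ H (f i) ω ∧ ∀ r' < f i, f i < r' + τ → H r' ω = 0}) =
      ⋂ u ∈ T.biUnion B, H u ⁻¹' C u := by
    ext ω
    simp only [Set.mem_iInter, Finset.mem_biUnion, Set.mem_preimage, Set.mem_setOf_eq]
    constructor
    · rintro h u ⟨i, hi, hu⟩
      by_cases hne : u = f i
      · subst hne
        rw [hC]; simp only []
        rw [if_pos ⟨i, hi, rfl⟩]
        exact (h i hi).1
      · rw [hC]; simp only []
        rw [if_neg (keyi i hi u hu hne)]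
        have h2 := hf1 i hi
        simp only [hB, Finset.mem_Icc] at hu
        exact (h i hi).2 u (by omega) (by omega)
    · intro h i hi
      have h2 := hf1 i hi
      constructor
      · have hm : f i ∈ B i := by simp only [hB, Finset.mem_Icc]; omega
        have := h (f i) ⟨i, hi, hm⟩
        rw [hC] at this; simp only [] at this
        rwa [if_pos ⟨i, hi, rfl⟩] at this
      · intro r' hr1 hr2
        have hm : r' ∈ B i := by simp only [hB, Finset.mem_Icc]; omega
        have := h r' ⟨i, hi, hm⟩
        rw [hC] at this; simp only [] at this
        rwa [if_neg (keyi i hi r' hm (by omega))] at this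
  rw [hset]
  have hI := hind.measure_inter_preimage_eq_mul (T.biUnion B) (sets := C)
    (fun u _ => trivial)
  rw [hI]
  have hdisj : (T : Set ℕ).PairwiseDisjoint B := by
    intro i hi i' hi' hne
    have h2 := hf1 i hi
    have h3 := hf1 i' hi'
    simp only [Function.onFun]
    rw [Finset.disjoint_left]
    intro u hu hu'
    simp only [hB, Finset.mem_Icc] at hu hu'
    rcases hsep i hi i' hi' hne with h | h <;> omega
  rw [Finset.prod_biUnion hdisj]
  have hblock : ∀ i ∈ T, ∏ u ∈ B i, P (H u ⁻¹' C u) =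
      ENNReal.ofReal (Real.exp (-lam) ^ (τ - 1) * (1 - Real.exp (-lam))) := by
    intro i hi
    have hfi := hf1 i hi
    have hBi : B i = insert (f i) (Finset.Icc (f i + 1 - τ) (f i - 1)) := by
      ext u; simp only [hB, Finset.mem_Icc, Finset.mem_insert]; omega
    rw [hBi, Finset.prod_insert (by simp only [Finset.mem_Icc]; omega)]
    have hCtop : C (f i) = {k | 1 ≤ k} := if_pos ⟨i, hi, rfl⟩
    have hprod : ∏ u ∈ Finset.Icc (f i + 1 - τ) (f i - 1), P (H u ⁻¹' C u) =
        ENNReal.ofReal (Real.exp (-lam)) ^ (τ - 1) := by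
      rw [Finset.prod_congr rfl (g := fun _ => ENNReal.ofReal (Real.exp (-lam)))
        (fun u hu => ?_), Finset.prod_const, Nat.card_Icc]
      · congr 1; omega
      · simp only [Finset.mem_Icc] at hu
        have hmem : u ∈ B i := by simp only [hB, Finset.mem_Icc]; omega
        have hCu : C u = {0} := if_neg (keyi i hi u hmem (by omega))
        rw [hCu]; exact h0 u
    have he1 : Real.exp (-lam) ≤ 1 := Real.exp_le_one_iff.mpr (neg_nonpos.mpr hlam.le)
    rw [hCtop, hprod, h1 (f i), ← ENNReal.ofReal_pow (Real.exp_nonneg _),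
      ← ENNReal.ofReal_mul (by linarith)]
    congr 1
    ring
  rw [Finset.prod_congr rfl hblock, Finset.prod_const]

lemma erc_exp_integral {Ω : Type*} [MeasurableSpace Ω]
    (P : Measure Ω) [IsProbabilityMeasure P]
    (H : ℕ → Ω → ℕ) (hmeas : ∀ r, Measurable (H r))
    (hind : iIndepFun H P)
    (lam : ℝ) (hlam : 0 < lam)
    (hpois : ∀ r k, P {ω | H r ω = k} =
      ENNReal.ofReal (Real.exp (-lam) * lam ^ k / k.factorial))
    (τ : ℕ) (hτ : 1 ≤ τ)
    (X : ℕ → Ω → ℝ)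
    (hX : ∀ r ω, X r ω =
      if (1 ≤ H r ω ∧ ∀ r' < r, r < r' + τ → H r' ω = 0) then 1 else 0)
    (s : ℝ) (m : ℕ) (g : ℕ → ℕ) (hg1 : ∀ i, τ ≤ g i)
    (hgsep : ∀ i i', i ≠ i' → g i + τ ≤ g i' ∨ g i' + τ ≤ g i) :
    ∫ ω, Real.exp (s * ∑ i ∈ Finset.range m, X (g i) ω) ∂P =
      (1 + (Real.exp s - 1) * (Real.exp (-lam) ^ (τ - 1) * (1 - Real.exp (-lam)))) ^ m := by
  classical
  set γ0 : ℝ := Real.exp (-lam) ^ (τ - 1) * (1 - Real.exp (-lam)) with hγ0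
  have hγ0nn : 0 ≤ γ0 := by
    have he1 : Real.exp (-lam) ≤ 1 := Real.exp_le_one_iff.mpr (neg_nonpos.mpr hlam.le)
    have := Real.exp_nonneg (-lam)
    rw [hγ0]
    exact mul_nonneg (pow_nonneg ‹0 ≤ Real.exp (-lam)› _) (by linarith)
  set A : ℕ → Set Ω := fun v => {ω | 1 ≤ H v ω ∧ ∀ r' < v, v < r' + τ → H r' ω = 0} with hA
  have hAm : ∀ v, MeasurableSet (A v) := by
    intro v
    have : A v = H v ⁻¹' {k | 1 ≤ k} ∩
        ⋂ r', ⋂ (_ : r' < v ∧ v < r' + τ), H r' ⁻¹' {0} := by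
      ext ω
      simp only [hA, Set.mem_setOf_eq, Set.mem_inter_iff, Set.mem_preimage, Set.mem_iInter,
        Set.mem_singleton_iff]
      constructor
      · rintro ⟨h1, h2⟩; exact ⟨h1, fun r' hr' => h2 r' hr'.1 hr'.2⟩
      · rintro ⟨h1, h2⟩; exact ⟨h1, fun r' hr1 hr2 => h2 r' ⟨hr1, hr2⟩⟩
    rw [this]
    exact ((hmeas v) trivial).inter
      (MeasurableSet.iInter fun r' => MeasurableSet.iInter fun _ => (hmeas r') trivial)
  have hXi : ∀ v ω, X v ω = (A v).indicator (1 : Ω → ℝ) ω := by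
    intro v ω
    rw [hX v ω, Set.indicator_apply]
    by_cases h : ω ∈ A v
    · rw [if_pos h]; exact if_pos h
    · rw [if_neg h]; exact if_neg h
  -- pointwise expansion
  have hpt : ∀ ω, Real.exp (s * ∑ i ∈ Finset.range m, X (g i) ω) =
      ∑ T ∈ (Finset.range m).powerset, (Real.exp s - 1) ^ T.card *
        Set.indicator (⋂ i ∈ T, A (g i)) (1 : Ω → ℝ) ω := by
    intro ω
    rw [Finset.mul_sum, Real.exp_sum]
    have hfac : ∀ i ∈ Finset.range m, Real.exp (s * X (g i) ω) =
        (Real.exp s - 1) * (A (g i)).indicator (1 : Ω → ℝ) ω + 1 := by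
      intro i _
      by_cases h : ω ∈ A (g i)
      · rw [hXi, Set.indicator_of_mem h]
        simp
      · rw [hXi, Set.indicator_of_notMem h]
        simp
    rw [Finset.prod_congr rfl hfac, Finset.prod_add]
    apply Finset.sum_congr rfl
    intro T hT
    rw [Finset.prod_const_one, mul_one, Finset.prod_mul_distrib, Finset.prod_const]
    congr 1
    by_cases h : ω ∈ ⋂ i ∈ T, A (g i)
    · rw [Set.indicator_of_mem h]
      exact Finset.prod_eq_one fun i hi =>
        Set.indicator_of_mem (Set.mem_iInter₂.mp h i hi) _
    · rw [Set.indicator_of_notMem h]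
      obtain ⟨i, hi, hni⟩ : ∃ i ∈ T, ω ∉ A (g i) := by
        by_contra hc; push_neg at hc; exact h (Set.mem_iInter₂.mpr hc)
      exact Finset.prod_eq_zero hi (Set.indicator_of_notMem hni _)
  have hInt : ∀ T : Finset ℕ, MeasurableSet (⋂ i ∈ T, A (g i)) :=
    fun T => MeasurableSet.biInter (Finset.countable_toSet T) fun i _ => hAm (g i)
  calc ∫ ω, Real.exp (s * ∑ i ∈ Finset.range m, X (g i) ω) ∂P
      = ∫ ω, ∑ T ∈ (Finset.range m).powerset, (Real.exp s - 1) ^ T.card *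
          Set.indicator (⋂ i ∈ T, A (g i)) (1 : Ω → ℝ) ω ∂P := by
        exact integral_congr_ae (ae_of_all _ hpt)
    _ = ∑ T ∈ (Finset.range m).powerset, ∫ ω, (Real.exp s - 1) ^ T.card *
          Set.indicator (⋂ i ∈ T, A (g i)) (1 : Ω → ℝ) ω ∂P := by
        refine integral_finset_sum _ fun T _ => ?_
        exact ((integrable_const (1:ℝ)).indicator (hInt T)).const_mul _
    _ = ∑ T ∈ (Finset.range m).powerset, ((Real.exp s - 1) * γ0) ^ T.card := by
        refine Finset.sum_congr rfl fun T hT => ?_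
        rw [integral_const_mul, integral_indicator_one (hInt T)]
        have hj : P (⋂ i ∈ T, A (g i)) = ENNReal.ofReal γ0 ^ T.card :=
          erc_joint P H hmeas hind lam hlam hpois τ hτ T g
            (fun i _ => hg1 i) (fun i _ i' _ hne => hgsep i i' hne)
        rw [measureReal_def, hj, ENNReal.toReal_pow, ENNReal.toReal_ofReal hγ0nn, ← mul_pow]
    _ = (1 + (Real.exp s - 1) * γ0) ^ m := by
        have hexp := Finset.prod_add (fun _ : ℕ => (Real.exp s - 1) * γ0)
          (fun _ : ℕ => (1:ℝ)) (Finset.range m)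
        simp only [Finset.prod_const, Finset.prod_const_one, mul_one, one_pow,
          Finset.card_range] at hexp
        rw [← hexp, add_comm]

lemma erc_integrable_of_bounded {Ω : Type*} [MeasurableSpace Ω] (P : Measure Ω)
    [IsFiniteMeasure P] {f : Ω → ℝ} (hf : Measurable f) (C : ℝ) (h : ∀ ω, |f ω| ≤ C) :
    Integrable f P :=
  (integrable_const C).mono' hf.aestronglyMeasurable
    (ae_of_all _ fun ω => by simpa using h ω)

/-- Chernoff-type bound on the number of effective rounds in a window of `τm`
consecutive rounds starting from a round `r ≥ τ`. -/
theorem effective_round_chernoff {Ω : Type*} [MeasurableSpace Ω]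
    (P : Measure Ω) [IsProbabilityMeasure P]
    (H : ℕ → Ω → ℕ) (hmeas : ∀ r, Measurable (H r))
    (hind : iIndepFun H P)
    (lam : ℝ) (hlam : 0 < lam)
    (hpois : ∀ r k, P {ω | H r ω = k} =
      ENNReal.ofReal (Real.exp (-lam) * lam ^ k / k.factorial))
    (τ : ℕ) (hτ : 1 ≤ τ)
    (X : ℕ → Ω → ℝ)
    (hX : ∀ r ω, X r ω =
      if (1 ≤ H r ω ∧ ∀ r' < r, r < r' + τ → H r' ω = 0) then 1 else 0)
    (γ : ℝ) (hγ : γ = Real.exp (-lam * ((τ : ℝ) - 1)) * (1 - Real.exp (-lam)))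
    (r m : ℕ) (hr : τ ≤ r) (hm : 1 ≤ m)
    (δ : ℝ) (hδ0 : 0 < δ) (hδ1 : δ < 1) :
    (P {ω | ∑ i ∈ Finset.range (τ * m), X (r + i) ω ≤
        (1 - δ) * γ * (τ * m : ℕ)}).toReal ≤
      Real.exp (-δ ^ 2 * γ * m / 2) := by
  have hτR : (0:ℝ) < τ := by exact_mod_cast hτ
  have he1 : Real.exp (-lam) < 1 := Real.exp_lt_one_iff.mpr (neg_neg_iff_pos.mpr hlam)
  have henn : 0 ≤ Real.exp (-lam) := Real.exp_nonneg _
  -- γ as a natural power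
  have hγ0 : γ = Real.exp (-lam) ^ (τ - 1) * (1 - Real.exp (-lam)) := by
    rw [hγ]
    congr 1
    rw [← Real.exp_nat_mul]
    congr 1
    have : ((τ - 1 : ℕ) : ℝ) = (τ : ℝ) - 1 := by
      rw [Nat.cast_sub hτ]; norm_num
    rw [this]; ring
  have hγpos : 0 < γ := by
    rw [hγ0]
    exact mul_pos (pow_pos (Real.exp_pos _) _) (by linarith)
  have hγle1 : γ ≤ 1 := by
    rw [hγ0]
    calc Real.exp (-lam) ^ (τ - 1) * (1 - Real.exp (-lam)) ≤ 1 * 1 :=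
        mul_le_mul (pow_le_one₀ henn he1.le) (by linarith) (by linarith) one_pos.le
      _ = 1 := one_mul 1
  -- the indicator sets and measurability of X
  have hXval : ∀ v ω, X v ω = 0 ∨ X v ω = 1 := by
    intro v ω
    rw [hX]
    by_cases h : (1 ≤ H v ω ∧ ∀ r' < v, v < r' + τ → H r' ω = 0)
    · right; rw [if_pos h]
    · left; rw [if_neg h]
  have hXnn : ∀ v ω, 0 ≤ X v ω := by
    intro v ω; rcases hXval v ω with h | h <;> rw [h] <;> norm_num
  have hXle : ∀ v ω, X v ω ≤ 1 := by
    intro v ω; rcases hXval v ω with h | h <;> rw [h] <;> norm_num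
  have hXm : ∀ v, Measurable (X v) := by
    intro v
    have : X v = fun ω =>
        if ω ∈ {ω | 1 ≤ H v ω ∧ ∀ r' < v, v < r' + τ → H r' ω = 0} then (1:ℝ) else 0 :=
      funext fun ω => hX v ω
    rw [this]
    apply Measurable.ite ?_ measurable_const measurable_const
    have : {ω | 1 ≤ H v ω ∧ ∀ r' < v, v < r' + τ → H r' ω = 0} = H v ⁻¹' {k | 1 ≤ k} ∩
        ⋂ r', ⋂ (_ : r' < v ∧ v < r' + τ), H r' ⁻¹' {0} := by
      ext ω
      simp only [Set.mem_setOf_eq, Set.mem_inter_iff, Set.mem_preimage, Set.mem_iInter,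
        Set.mem_singleton_iff]
      constructor
      · rintro ⟨h1, h2⟩; exact ⟨h1, fun r' hr' => h2 r' hr'.1 hr'.2⟩
      · rintro ⟨h1, h2⟩; exact ⟨h1, fun r' hr1 hr2 => h2 r' ⟨hr1, hr2⟩⟩
    rw [this]
    exact ((hmeas v) trivial).inter
      (MeasurableSet.iInter fun r' => MeasurableSet.iInter fun _ => (hmeas r') trivial)
  -- subsums
  set T : ℕ → Ω → ℝ := fun j ω => ∑ k ∈ Finset.range m, X (r + (j + τ * k)) ω with hT
  have hTm : ∀ j, Measurable (T j) :=
    fun j => Finset.measurable_sum _ fun k _ => hXm _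
  have hTnn : ∀ j ω, 0 ≤ T j ω :=
    fun j ω => Finset.sum_nonneg fun k _ => hXnn _ ω
  set S : Ω → ℝ := fun ω => ∑ i ∈ Finset.range (τ * m), X (r + i) ω with hS
  have hSm : Measurable S := Finset.measurable_sum _ fun i _ => hXm _
  have hSnn : ∀ ω, 0 ≤ S ω := fun ω => Finset.sum_nonneg fun i _ => hXnn _ ω
  have hsplit : ∀ ω, S ω = ∑ j ∈ Finset.range τ, T j ω := by
    intro ω
    rw [hS]
    exact erc_sum_split (fun i => X (r + i) ω) τ m
  -- the tilt parameter
  set t : ℝ := Real.log (1 - δ) / τ with ht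
  have hlog_neg : Real.log (1 - δ) < 0 := Real.log_neg (by linarith) (by linarith)
  have ht0 : t ≤ 0 := div_nonpos_of_nonpos_of_nonneg hlog_neg.le hτR.le
  have htτ : t * τ = Real.log (1 - δ) := by
    rw [ht]; field_simp
  -- integrability
  have hintS : Integrable (fun ω => Real.exp (t * S ω)) P := by
    apply erc_integrable_of_bounded P (by fun_prop) 1
    intro ω
    rw [abs_of_nonneg (Real.exp_nonneg _)]
    exact Real.exp_le_one_iff.mpr (mul_nonpos_of_nonpos_of_nonneg ht0 (hSnn ω))
  have hintT : ∀ j, Integrable (fun ω => Real.exp ((t * τ) * T j ω)) P := by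
    intro j
    apply erc_integrable_of_bounded P (by fun_prop) 1
    intro ω
    rw [abs_of_nonneg (Real.exp_nonneg _)]
    refine Real.exp_le_one_iff.mpr (mul_nonpos_of_nonpos_of_nonneg ?_ (hTnn j ω))
    exact mul_nonpos_of_nonpos_of_nonneg ht0 hτR.le
  -- Chernoff-Markov step
  have key := measure_le_le_exp_mul_mgf (μ := P) (X := S)
    ((1 - δ) * γ * ((τ * m : ℕ) : ℝ)) ht0 hintS
  refine le_trans (by exact key) ?_
  -- bound the mgf
  have hAM : ∀ ω, Real.exp (t * S ω) ≤
      ∑ j ∈ Finset.range τ, (1 / (τ:ℝ)) * Real.exp ((t * τ) * T j ω) := by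
    intro ω
    have hw : ∑ _j ∈ Finset.range τ, (1 / (τ:ℝ)) = 1 := by
      rw [Finset.sum_const, Finset.card_range, nsmul_eq_mul]
      field_simp
    have hgm := Real.geom_mean_le_arith_mean_weighted (Finset.range τ)
      (fun _ => 1 / (τ:ℝ)) (fun j => Real.exp ((t * τ) * T j ω))
      (fun _ _ => by positivity) hw (fun _ _ => Real.exp_nonneg _)
    calc Real.exp (t * S ω)
        = ∏ j ∈ Finset.range τ, Real.exp ((t * τ) * T j ω) ^ (1 / (τ:ℝ)) := by
          rw [hsplit, Finset.mul_sum, Real.exp_sum]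
          refine Finset.prod_congr rfl fun j _ => ?_
          rw [← Real.exp_mul]
          congr 1
          field_simp
      _ ≤ ∑ j ∈ Finset.range τ, (1 / (τ:ℝ)) * Real.exp ((t * τ) * T j ω) := hgm
  have hmgf : mgf S P t ≤ (1 - δ * γ) ^ m := by
    have h1 : mgf S P t ≤
        ∫ ω, ∑ j ∈ Finset.range τ, (1 / (τ:ℝ)) * Real.exp ((t * τ) * T j ω) ∂P := by
      refine integral_mono hintS ?_ hAM
      exact integrable_finset_sum _ fun j _ => (hintT j).const_mul _
    have h2 : ∫ ω, ∑ j ∈ Finset.range τ, (1 / (τ:ℝ)) * Real.exp ((t * τ) * T j ω) ∂P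
        = (1 - δ * γ) ^ m := by
      rw [integral_finset_sum _ fun j _ => (hintT j).const_mul _]
      have h3 : ∀ j ∈ Finset.range τ, (∫ ω, (1 / (τ:ℝ)) *
          Real.exp ((t * τ) * T j ω) ∂P) = (1 / (τ:ℝ)) * (1 - δ * γ) ^ m := by
        intro j _
        rw [integral_const_mul]
        congr 1
        have hg1 : ∀ k, τ ≤ r + (j + τ * k) := fun k => le_trans hr (by omega)
        have hgsep : ∀ k k', k ≠ k' →
            r + (j + τ * k) + τ ≤ r + (j + τ * k') ∨
            r + (j + τ * k') + τ ≤ r + (j + τ * k) := by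
          intro k k' hne
          rcases Nat.lt_or_ge k k' with h | h
          · left
            have := Nat.mul_le_mul_left τ (Nat.succ_le_of_lt h)
            rw [Nat.mul_succ] at this
            omega
          · right
            have hk : k' < k := by omega
            have := Nat.mul_le_mul_left τ (Nat.succ_le_of_lt hk)
            rw [Nat.mul_succ] at this
            omega
        have := erc_exp_integral P H hmeas hind lam hlam hpois τ hτ X hX
          (t * τ) m (fun k => r + (j + τ * k)) hg1 hgsep
        rw [this, htτ, Real.exp_log (by linarith : (0:ℝ) < 1 - δ), ← hγ0]
        ring_nf
      rw [Finset.sum_congr rfl h3, Finset.sum_const, Finset.card_range, nsmul_eq_mul]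
      field_simp
    calc mgf S P t ≤ _ := h1
      _ = (1 - δ * γ) ^ m := h2
  -- final numeric computation
  have hδγ : δ * γ ≤ 1 := by nlinarith
  have hpow : (1 - δ * γ) ^ m ≤ Real.exp (-(δ * γ) * m) := by
    calc (1 - δ * γ) ^ m ≤ Real.exp (-(δ * γ)) ^ m := by
          apply pow_le_pow_left₀ (by linarith)
          linarith [Real.add_one_le_exp (-(δ * γ))]
      _ = Real.exp (-(δ * γ) * m) := by
          rw [← Real.exp_nat_mul]; ring_nf
  have hexp_nonneg : 0 ≤ Real.exp (-t * ((1 - δ) * γ * ((τ * m : ℕ) : ℝ))) :=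
    Real.exp_nonneg _
  calc Real.exp (-t * ((1 - δ) * γ * ((τ * m : ℕ) : ℝ))) * mgf S P t
      ≤ Real.exp (-t * ((1 - δ) * γ * ((τ * m : ℕ) : ℝ))) * Real.exp (-(δ * γ) * m) := by
        apply mul_le_mul_of_nonneg_left (le_trans hmgf hpow) hexp_nonneg
    _ = Real.exp (-t * ((1 - δ) * γ * ((τ * m : ℕ) : ℝ)) + -(δ * γ) * m) := by
        rw [← Real.exp_add]
    _ ≤ Real.exp (-δ ^ 2 * γ * m / 2) := by
        apply Real.exp_le_exp.mpr
        have hcast : ((τ * m : ℕ) : ℝ) = (τ : ℝ) * m := by push_cast; ring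
        rw [hcast, ht]
        have hτne : (τ:ℝ) ≠ 0 := ne_of_gt hτR
        have hL := erc_log_ineq hδ0 hδ1
        have hγm : 0 ≤ γ * m := mul_nonneg hγpos.le (Nat.cast_nonneg m)
        have hexpand : -(Real.log (1 - δ) / τ) * ((1 - δ) * γ * ((τ:ℝ) * m)) =
            -(Real.log (1 - δ)) * (1 - δ) * γ * m := by
          field_simp
        rw [hexpand]
        nlinarith [mul_le_mul_of_nonneg_right hL hγm]
end
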